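/- The join (C_3 ∪ C_3) + C_3 is 1-planar. -/

import Mathlib

open SimpleGraph

/-- A graph is 1-planar if it admits a drawing in the plane (vertices at distinct points,
edges as continuous injective arcs joining the points of their endvertices, arcs meeting
vertex points only at their endpoints, no point interior to three edges) in which each edge
is crossed at most once, i.e. the interior of the arc of each edge meets the interiors of
the arcs of the other edges in at most one point. -/
def SimpleGraph.OnePlanar {V : Type*} (G : SimpleGraph V) : Prop :=
  ∃ (pos : V → ℝ × ℝ) (γ : V → V → ℝ → ℝ × ℝ),
    -- distinct vertices are drawn at distinct points
    Function.Injective pos ∧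
    -- each edge is drawn as a continuous injective arc joining its endpoints
    (∀ u v, G.Adj u v → ContinuousOn (γ u v) (Set.Icc 0 1)) ∧
    (∀ u v, G.Adj u v → Set.InjOn (γ u v) (Set.Icc 0 1)) ∧
    (∀ u v, G.Adj u v → γ u v 0 = pos u ∧ γ u v 1 = pos v) ∧
    -- the arc drawn for an edge does not depend on its orientation
    (∀ u v, G.Adj u v → ∀ t : ℝ, γ v u t = γ u v (1 - t)) ∧
    -- the interior of an arc passes through no vertex point
    (∀ u v, G.Adj u v → ∀ t ∈ Set.Ioo (0:ℝ) 1, ∀ w, γ u v t ≠ pos w) ∧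
    -- no point of the plane is interior to the arcs of three distinct edges
    (∀ u v x y x' y', G.Adj u v → G.Adj x y → G.Adj x' y' →
      ∀ t ∈ Set.Ioo (0:ℝ) 1, ∀ s ∈ Set.Ioo (0:ℝ) 1, ∀ s' ∈ Set.Ioo (0:ℝ) 1,
        γ x y s = γ u v t → γ x' y' s' = γ u v t →
        s(x, y) ≠ s(u, v) → s(x', y') ≠ s(u, v) → s(x, y) = s(x', y')) ∧
    -- each edge is crossed at most once
    (∀ u v, G.Adj u v →
      {t : ℝ | t ∈ Set.Ioo (0:ℝ) 1 ∧ ∃ x y, G.Adj x y ∧ s(x, y) ≠ s(u, v) ∧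
        ∃ s ∈ Set.Ioo (0:ℝ) 1, γ x y s = γ u v t}.Subsingleton)

/-- The join `G + H` of two vertex-disjoint graphs: the disjoint union of `G` and `H`
together with all edges between the two vertex sets. -/
def SimpleGraph.join {α β : Type*} (G : SimpleGraph α) (H : SimpleGraph β) :
    SimpleGraph (α ⊕ β) where
  Adj u v := match u, v with
    | Sum.inl u, Sum.inl v => G.Adj u v
    | Sum.inr u, Sum.inr v => H.Adj u v
    | _, _ => True
  symm := ⟨fun u v => match u, v with
    | Sum.inl _, Sum.inl _ => fun h => G.adj_symm h
    | Sum.inr _, Sum.inr _ => fun h => H.adj_symm h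
    | Sum.inl _, Sum.inr _ => fun _ => trivial
    | Sum.inr _, Sum.inl _ => fun _ => trivial⟩
  loopless := ⟨fun u => match u with
    | Sum.inl a => G.loopless.irrefl a
    | Sum.inr b => H.loopless.irrefl b⟩

/-- `G` is isomorphic to a subgraph of `H`. -/
def SimpleGraph.IsSubgraphOf {α β : Type*} (G : SimpleGraph α) (H : SimpleGraph β) : Prop :=
  ∃ f : G →g H, Function.Injective f

/-!
Draw the three triangles as concentric triangles with straight edges: the first copy of `C₃`
inside, the joined `C₃ = c₀c₁c₂` in the middle and the second copy outside. For a triangle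
`a₀a₁a₂` (inner or outer) the edge `aᵢcᵢ` crosses nothing and the edges `aᵢcⱼ`, `aⱼcᵢ` cross each
other once; no other edges meet. With integer coordinates in general position, all of this
reduces to the signs of finitely many integer orientation determinants.
-/

open Set AffineMap

section DecidableAdj

variable {α β : Type*} (G : SimpleGraph α) (H : SimpleGraph β) [DecidableRel G.Adj]
  [DecidableRel H.Adj]

instance : DecidableRel (G ⊕g H).Adj
  | .inl u, .inl v => inferInstanceAs (Decidable (G.Adj u v))
  | .inr u, .inr v => inferInstanceAs (Decidable (H.Adj u v))
  | .inl _, .inr _ => .isFalse (by simp)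
  | .inr _, .inl _ => .isFalse (by simp)

instance : DecidableRel (G.join H).Adj
  | .inl u, .inl v => inferInstanceAs (Decidable (G.Adj u v))
  | .inr u, .inr v => inferInstanceAs (Decidable (H.Adj u v))
  | .inl _, .inr _ => .isTrue trivial
  | .inr _, .inl _ => .isTrue trivial

end DecidableAdj

section Orientation

variable {𝕜 : Type*}

def cross [CommRing 𝕜] (p q : 𝕜 × 𝕜) : 𝕜 := p.1 * q.2 - p.2 * q.1

def orient [CommRing 𝕜] (a b c : 𝕜 × 𝕜) : 𝕜 := cross (b - a) (c - a)

/-- `c` and `d` lie weakly on one side of the line `ab`, not both on it. -/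
abbrev LineAvoidsOpenSegment [CommRing 𝕜] [LinearOrder 𝕜] (a b c d : 𝕜 × 𝕜) : Prop :=
  0 ≤ orient a b c * orient a b d ∧ orient a b c + orient a b d ≠ 0

lemma cross_intCast [CommRing 𝕜] (p q : ℤ × ℤ) :
    cross (p.map (↑) (↑) : 𝕜 × 𝕜) (q.map (↑) (↑)) = cross p q := by
  simp [cross]

lemma orient_intCast [CommRing 𝕜] (a b c : ℤ × ℤ) :
    orient (a.map (↑) (↑) : 𝕜 × 𝕜) (b.map (↑) (↑)) (c.map (↑) (↑)) = orient a b c := by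
  simp [orient, cross]

lemma orient_lineMap [CommRing 𝕜] (a b c d : 𝕜 × 𝕜) (s : 𝕜) :
    orient a b (lineMap c d s) = (1 - s) * orient a b c + s * orient a b d := by
  simp only [orient, cross, lineMap_apply_module, Prod.fst_add, Prod.snd_add, Prod.smul_fst,
    Prod.smul_snd, Prod.fst_sub, Prod.snd_sub, smul_eq_mul]
  ring

variable [Field 𝕜] [LinearOrder 𝕜] [IsStrictOrderedRing 𝕜]

lemma orient_eq_zero_of_mem_openSegment {a b z : 𝕜 × 𝕜} (hz : z ∈ openSegment 𝕜 a b) :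
    orient a b z = 0 := by
  obtain ⟨t, -, rfl⟩ := (openSegment_eq_image_lineMap 𝕜 a b).subset hz
  rw [orient_lineMap]
  simp only [orient, cross, Prod.fst_sub, Prod.snd_sub]
  ring

lemma LineAvoidsOpenSegment.disjoint {a b c d : 𝕜 × 𝕜} (h : LineAvoidsOpenSegment a b c d) :
    Disjoint (openSegment 𝕜 a b) (openSegment 𝕜 c d) := by
  refine Set.disjoint_left.2 fun z hab hcd => ?_
  obtain ⟨s, ⟨hs0, hs1⟩, rfl⟩ := (openSegment_eq_image_lineMap 𝕜 c d).subset hcd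
  have hz := orient_eq_zero_of_mem_openSegment hab
  rw [orient_lineMap] at hz
  obtain ⟨hsign, hsum⟩ := h
  set p := orient a b c
  set q := orient a b d
  have hp : p = 0 := by
    have h1 : (1 - s) * p ^ 2 = -(s * (p * q)) := by linear_combination p * hz
    have hp2 : p ^ 2 ≤ 0 := by
      nlinarith [mul_nonneg hs0.le hsign, sub_pos.2 hs1]
    exact pow_eq_zero_iff two_ne_zero |>.1 (le_antisymm hp2 (sq_nonneg p))
  have hq : q = 0 := by
    rw [hp, mul_zero, zero_add] at hz
    exact (mul_eq_zero.1 hz).resolve_left hs0.ne'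
  exact hsum (by rw [hp, hq, add_zero])

lemma subsingleton_openSegment_inter_of_cross_ne_zero {a b c d : 𝕜 × 𝕜}
    (h : cross (b - a) (d - c) ≠ 0) :
    (openSegment 𝕜 a b ∩ openSegment 𝕜 c d).Subsingleton := by
  rintro _ ⟨h₁, h₁'⟩ _ ⟨h₂, h₂'⟩
  obtain ⟨t₁, -, rfl⟩ := (openSegment_eq_image_lineMap 𝕜 a b).subset h₁
  obtain ⟨t₂, -, rfl⟩ := (openSegment_eq_image_lineMap 𝕜 a b).subset h₂
  obtain ⟨σ₁, -, e₁⟩ := (openSegment_eq_image_lineMap 𝕜 c d).subset h₁'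
  obtain ⟨σ₂, -, e₂⟩ := (openSegment_eq_image_lineMap 𝕜 c d).subset h₂'
  suffices (t₁ - t₂) * cross (b - a) (d - c) = 0 by
    rw [sub_eq_zero.1 ((mul_eq_zero.1 this).resolve_right h)]
  simp only [lineMap_apply_module, Prod.ext_iff, Prod.fst_add, Prod.snd_add, Prod.smul_fst,
    Prod.smul_snd, smul_eq_mul] at e₁ e₂
  simp only [cross, Prod.fst_sub, Prod.snd_sub]
  linear_combination (d.2 - c.2) * (e₂.1 - e₁.1) - (d.1 - c.1) * (e₂.2 - e₁.2)

lemma LineAvoidsOpenSegment.intCast {a b c d : ℤ × ℤ}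
    (h : LineAvoidsOpenSegment a b c d) :
    LineAvoidsOpenSegment (a.map (↑) (↑) : 𝕜 × 𝕜) (b.map (↑) (↑)) (c.map (↑) (↑))
      (d.map (↑) (↑)) := by
  simp only [LineAvoidsOpenSegment, orient_intCast]
  exact_mod_cast h

end Orientation

lemma SimpleGraph.OnePlanar.of_straightLine {V : Type*} {G : SimpleGraph V} (pos : V → ℝ × ℝ)
    (h_inj : Function.Injective pos)
    (h_vertex : ∀ u v w, G.Adj u v → pos w ∉ openSegment ℝ (pos u) (pos v))
    (h_unique : ∀ u v x y x' y', G.Adj u v → G.Adj x y → G.Adj x' y' →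
      s(x, y) ≠ s(u, v) → s(x', y') ≠ s(u, v) →
      (openSegment ℝ (pos u) (pos v) ∩ openSegment ℝ (pos x) (pos y)).Nonempty →
      (openSegment ℝ (pos u) (pos v) ∩ openSegment ℝ (pos x') (pos y')).Nonempty →
      s(x, y) = s(x', y'))
    (h_transversal : ∀ u v x y, G.Adj u v → G.Adj x y → s(x, y) ≠ s(u, v) →
      (openSegment ℝ (pos u) (pos v) ∩ openSegment ℝ (pos x) (pos y)).Subsingleton) :
    G.OnePlanar := by
  have mem : ∀ p q : ℝ × ℝ, ∀ t ∈ Ioo (0 : ℝ) 1, lineMap p q t ∈ openSegment ℝ p q :=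
    fun p q t ht => (openSegment_eq_image_lineMap ℝ p q).superset ⟨t, ht, rfl⟩
  have meet : ∀ {p q r w : ℝ × ℝ} {t s : ℝ}, t ∈ Ioo 0 1 → s ∈ Ioo 0 1 →
      lineMap r w s = lineMap p q t → lineMap p q t ∈ openSegment ℝ p q ∩ openSegment ℝ r w :=
    fun ht hs h => ⟨mem _ _ _ ht, h ▸ mem _ _ _ hs⟩
  refine ⟨pos, fun u v => lineMap (pos u) (pos v), h_inj,
    fun u v _ => lineMap_continuous.continuousOn,
    fun u v huv => (lineMap_injective ℝ (h_inj.ne huv.ne)).injOn,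
    fun u v _ => ⟨lineMap_apply_zero _ _, lineMap_apply_one _ _⟩,
    fun u v _ t => (lineMap_apply_one_sub _ _ t).symm,
    fun u v huv t ht w hw => h_vertex u v w huv (hw ▸ mem _ _ t ht), ?_, ?_⟩
  · intro u v x y x' y' huv hxy hxy' t ht s hs s' hs' hst hs't hne hne'
    exact h_unique u v x y x' y' huv hxy hxy' hne hne' ⟨_, meet ht hs hst⟩ ⟨_, meet ht hs' hs't⟩
  · rintro u v huv t ⟨ht, x, y, hxy, hne, s, hs, hst⟩ t' ⟨ht', x', y', hxy', hne', s', hs', hst'⟩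
    have hsame := h_unique u v x y x' y' huv hxy hxy' hne hne' ⟨_, meet ht hs hst⟩
      ⟨_, meet ht' hs' hst'⟩
    have hseg : openSegment ℝ (pos x') (pos y') = openSegment ℝ (pos x) (pos y) := by
      rcases Sym2.eq_iff.1 hsame with ⟨rfl, rfl⟩ | ⟨rfl, rfl⟩
      · rfl
      · exact openSegment_symm ℝ _ _
    exact lineMap_injective ℝ (h_inj.ne huv.ne) (h_transversal u v x y huv hxy hne
      (meet ht hs hst) (hseg ▸ meet ht' hs' hst'))

namespace C3Drawing

abbrev V : Type := (Fin 3 ⊕ Fin 3) ⊕ Fin 3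

abbrev G : SimpleGraph V := (cycleGraph 3 ⊕g cycleGraph 3).join (cycleGraph 3)

/-- The outer triangle is turned slightly (`(20, 1)` rather than `(20, 0)`) so that no three
vertices are collinear. -/
def coords : V → ℤ × ℤ :=
  Sum.elim
    (Sum.elim ![(2, 0), (-1, 2), (-1, -2)] ![(20, 1), (-10, 17), (-10, -17)])
    ![(6, 0), (-3, 5), (-3, -5)]

/-- The only edge that the edge `uv` may cross; an edge that crosses nothing is its own
partner. -/
def crossingPartner : V → V → Sym2 V
  | .inl (.inl i), .inr j | .inr j, .inl (.inl i) => s(.inl (.inl j), .inr i)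
  | .inl (.inr i), .inr j | .inr j, .inl (.inr i) => s(.inl (.inr j), .inr i)
  | u, v => s(u, v)

lemma coords_injective : Function.Injective coords := by decide

lemma coords_generalPosition : ∀ u v w : V,
    orient (coords u) (coords v) (coords w) = 0 → u = v ∨ u = w ∨ v = w := by decide

lemma lineAvoidsOpenSegment_or_crossingPartner :
    ∀ u v x y : V, G.Adj u v → G.Adj x y → s(x, y) ≠ s(u, v) →
    LineAvoidsOpenSegment (coords u) (coords v) (coords x) (coords y) ∨
    LineAvoidsOpenSegment (coords x) (coords y) (coords u) (coords v) ∨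
    (s(x, y) = crossingPartner u v ∧
      cross (coords v - coords u) (coords y - coords x) ≠ 0) := by decide

def pos (v : V) : ℝ × ℝ := (coords v).map (↑) (↑)

lemma pos_sub (u v : V) : pos u - pos v = (coords u - coords v).map (↑) (↑) := by
  ext <;> simp [pos]

lemma orient_pos (u v w : V) :
    orient (pos u) (pos v) (pos w) = orient (coords u) (coords v) (coords w) :=
  orient_intCast _ _ _

lemma pos_injective : Function.Injective pos :=
  (Prod.map_injective.2 ⟨Int.cast_injective, Int.cast_injective⟩).comp coords_injective

lemma pos_notMem_openSegment (u v w : V) (huv : G.Adj u v) :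
    pos w ∉ openSegment ℝ (pos u) (pos v) := by
  intro hw
  have h := orient_eq_zero_of_mem_openSegment hw
  rw [orient_pos, Int.cast_eq_zero] at h
  rcases coords_generalPosition u v w h with h | rfl | rfl
  · exact huv.ne h
  · exact huv.ne (pos_injective (left_mem_openSegment_iff.1 hw))
  · exact huv.ne (pos_injective (right_mem_openSegment_iff.1 hw))

lemma disjoint_or_crossingPartner {u v x y : V} (huv : G.Adj u v) (hxy : G.Adj x y)
    (hne : s(x, y) ≠ s(u, v)) :
    Disjoint (openSegment ℝ (pos u) (pos v)) (openSegment ℝ (pos x) (pos y)) ∨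
      s(x, y) = crossingPartner u v ∧ cross (pos v - pos u) (pos y - pos x) ≠ 0 := by
  rcases lineAvoidsOpenSegment_or_crossingPartner u v x y huv hxy hne with h | h | ⟨hp, hc⟩
  · exact .inl h.intCast.disjoint
  · exact .inl h.intCast.disjoint.symm
  · refine .inr ⟨hp, ?_⟩
    rwa [pos_sub, pos_sub, cross_intCast, Int.cast_ne_zero]

lemma eq_crossingPartner {u v x y : V} (huv : G.Adj u v) (hxy : G.Adj x y)
    (hne : s(x, y) ≠ s(u, v))
    (hmeet : (openSegment ℝ (pos u) (pos v) ∩ openSegment ℝ (pos x) (pos y)).Nonempty) :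
    s(x, y) = crossingPartner u v :=
  (disjoint_or_crossingPartner huv hxy hne).elim
    (fun hd => (not_disjoint_iff_nonempty_inter.2 hmeet hd).elim) And.left

lemma subsingleton_openSegment_inter {u v x y : V} (huv : G.Adj u v) (hxy : G.Adj x y)
    (hne : s(x, y) ≠ s(u, v)) :
    (openSegment ℝ (pos u) (pos v) ∩ openSegment ℝ (pos x) (pos y)).Subsingleton := by
  rcases disjoint_or_crossingPartner huv hxy hne with hd | ⟨-, hc⟩
  · rw [disjoint_iff_inter_eq_empty.1 hd]
    exact subsingleton_empty
  · exact subsingleton_openSegment_inter_of_cross_ne_zero hc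

end C3Drawing

/-- `(C₃ ∪ C₃) + C₃` is 1-planar. -/
theorem c3_cup_c3_join_c3_onePlanar :
    ((cycleGraph 3 ⊕g cycleGraph 3).join (cycleGraph 3)).OnePlanar :=
  .of_straightLine C3Drawing.pos C3Drawing.pos_injective C3Drawing.pos_notMem_openSegment
    (fun _ _ _ _ _ _ huv hxy hxy' hne hne' hmeet hmeet' =>
      (C3Drawing.eq_crossingPartner huv hxy hne hmeet).trans
        (C3Drawing.eq_crossingPartner huv hxy' hne' hmeet').symm)
    (fun _ _ _ _ => C3Drawing.subsingleton_openSegment_inter)
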